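/- If the numerical radius of T equals (1/2)‖T‖ + (1/2)·|‖Re(T)‖ − ‖Im(T)‖|, then ‖T‖ = ‖Re(T)‖ + ‖Im(T)‖ and w(T) = max{‖Re(T)‖, ‖Im(T)‖}. -/

import Mathlib

/-! The operators `(T + T†)/2` and `(T - T†)/(2i)` are Mathlib's `ℜ T` and `ℑ T`. Their quadratic
forms are the real and imaginary parts of that of `T`, and the norm of a self-adjoint operator is
the supremum of its quadratic form on the unit sphere, so `‖ℜ T‖, ‖ℑ T‖ ≤ w(T)`. Hence
`(‖ℜ T‖ + ‖ℑ T‖)/2 + |‖ℜ T‖ - ‖ℑ T‖|/2 = max ‖ℜ T‖ ‖ℑ T‖ ≤ w(T)`, and comparing with the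
hypothesis gives `‖ℜ T‖ + ‖ℑ T‖ ≤ ‖T‖`. The triangle inequality for `T = ℜ T + i ℑ T` gives
the reverse inequality, and then the hypothesis reads `w(T) = max ‖ℜ T‖ ‖ℑ T‖`. -/

open ContinuousLinearMap

noncomputable def nr {E : Type*} [NormedAddCommGroup E] [InnerProductSpace ℂ E]
    (T : E →L[ℂ] E) : ℝ :=
  sSup {r : ℝ | ∃ x : E, ‖x‖ = 1 ∧ r = ‖(inner ℂ (T x) x : ℂ)‖}

noncomputable def er {E : Type*} [NormedAddCommGroup E] [InnerProductSpace ℂ E]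
    (B C : E →L[ℂ] E) : ℝ :=
  sSup {r : ℝ | ∃ x : E, ‖x‖ = 1 ∧
    r = Real.sqrt (‖(inner ℂ (B x) x : ℂ)‖ ^ 2 + ‖(inner ℂ (C x) x : ℂ)‖ ^ 2)}

open ComplexStarModule

section StarModule

variable {A : Type*} [AddCommGroup A] [Module ℂ A] [StarAddMonoid A] [StarModule ℂ A]

theorem realPart_apply_coe_eq_inv_two_smul (a : A) : (ℜ a : A) = (2 : ℂ)⁻¹ • (a + star a) := by
  rw [realPart_apply_coe, ← Complex.coe_smul]
  norm_num

theorem imaginaryPart_apply_coe_eq_inv_two_I_smul (a : A) :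
    (ℑ a : A) = (2 * Complex.I)⁻¹ • (a - star a) := by
  rw [imaginaryPart_apply_coe, ← Complex.coe_smul, smul_smul]
  congr 1
  simp [field]

end StarModule

theorem norm_le_norm_realPart_add_norm_imaginaryPart {A : Type*} [NormedAddCommGroup A]
    [NormedSpace ℂ A] [StarAddMonoid A] [StarModule ℂ A] (a : A) :
    ‖a‖ ≤ ‖(ℜ a : A)‖ + ‖(ℑ a : A)‖ :=
  calc ‖a‖ = ‖(ℜ a : A) + Complex.I • (ℑ a : A)‖ := by rw [realPart_add_I_smul_imaginaryPart]
    _ ≤ ‖(ℜ a : A)‖ + ‖(ℑ a : A)‖ := by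
      simpa [norm_smul] using norm_add_le (ℜ a : A) (Complex.I • (ℑ a : A))

theorem ContinuousLinearMap.norm_le_of_forall_abs_re_inner_le {𝕜 E : Type*} [RCLike 𝕜]
    [NormedAddCommGroup E] [InnerProductSpace 𝕜 E] {T : E →L[𝕜] E} (hT : T.IsSymmetric)
    {M : ℝ} (hM : 0 ≤ M) (h : ∀ x : E, ‖x‖ = 1 → |RCLike.re (inner 𝕜 (T x) x)| ≤ M) :
    ‖T‖ ≤ M := by
  rw [T.norm_eq_iSup_rayleighQuotient hT]
  refine ciSup_le fun x => ?_
  rcases eq_or_ne x 0 with rfl | hx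
  · simpa using hM
  have hunit := norm_smul_inv_norm (𝕜 := 𝕜) hx
  rw [← T.rayleigh_smul x (inv_ne_zero (RCLike.ofReal_ne_zero.2 (norm_ne_zero_iff.2 hx)))]
  simpa [rayleighQuotient, reApplyInnerSelf_apply, hunit] using h _ hunit

section NumericalRadius

variable {H : Type*} [NormedAddCommGroup H] [InnerProductSpace ℂ H]

theorem norm_inner_apply_le_nr (T : H →L[ℂ] H) {x : H} (hx : ‖x‖ = 1) :
    ‖(inner ℂ (T x) x : ℂ)‖ ≤ nr T := by
  refine le_csSup ⟨‖T‖, ?_⟩ ⟨x, hx, rfl⟩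
  rintro _ ⟨y, hy, rfl⟩
  exact (norm_inner_le_norm _ _).trans (by simpa [hy] using T.le_opNorm y)

theorem nr_nonneg (T : H →L[ℂ] H) : 0 ≤ nr T :=
  Real.sSup_nonneg (by rintro _ ⟨x, -, rfl⟩; exact norm_nonneg _)

variable [CompleteSpace H]

theorem re_inner_realPart_apply (T : H →L[ℂ] H) (x : H) :
    (inner ℂ ((ℜ T : H →L[ℂ] H) x) x).re = (inner ℂ (T x) x).re := by
  rw [realPart_apply_coe_eq_inv_two_smul, star_eq_adjoint]
  simp only [smul_apply, add_apply, inner_smul_left, inner_add_left, adjoint_inner_left,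
    ← inner_conj_symm x (T x), Complex.add_conj]
  simp

-- The sign comes from `inner ℂ` being conjugate-linear in its first argument.
theorem re_inner_imaginaryPart_apply (T : H →L[ℂ] H) (x : H) :
    (inner ℂ ((ℑ T : H →L[ℂ] H) x) x).re = -(inner ℂ (T x) x).im := by
  rw [imaginaryPart_apply_coe_eq_inv_two_I_smul, star_eq_adjoint]
  simp only [smul_apply, sub_apply, inner_smul_left, inner_sub_left, adjoint_inner_left,
    ← inner_conj_symm x (T x), Complex.sub_conj]
  simp

theorem norm_realPart_le_nr (T : H →L[ℂ] H) : ‖(ℜ T : H →L[ℂ] H)‖ ≤ nr T :=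
  norm_le_of_forall_abs_re_inner_le (ℜ T).2.isSymmetric (nr_nonneg T) fun x hx => by
    rw [RCLike.re_to_complex, re_inner_realPart_apply]
    exact (Complex.abs_re_le_norm _).trans (norm_inner_apply_le_nr T hx)

theorem norm_imaginaryPart_le_nr (T : H →L[ℂ] H) : ‖(ℑ T : H →L[ℂ] H)‖ ≤ nr T :=
  norm_le_of_forall_abs_re_inner_le (ℑ T).2.isSymmetric (nr_nonneg T) fun x hx => by
    rw [RCLike.re_to_complex, re_inner_imaginaryPart_apply, abs_neg]
    exact (Complex.abs_im_le_norm _).trans (norm_inner_apply_le_nr T hx)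

end NumericalRadius

theorem stmt_16 {H : Type*} [NormedAddCommGroup H] [InnerProductSpace ℂ H] [CompleteSpace H]
    (T : H →L[ℂ] H)
    (h : nr T = (1 / 2) * ‖T‖
      + (1 / 2) * |‖(2 : ℂ)⁻¹ • (T + adjoint T)‖ - ‖(2 * Complex.I)⁻¹ • (T - adjoint T)‖|) :
    ‖T‖ = ‖(2 : ℂ)⁻¹ • (T + adjoint T)‖ + ‖(2 * Complex.I)⁻¹ • (T - adjoint T)‖ ∧
    nr T = max ‖(2 : ℂ)⁻¹ • (T + adjoint T)‖ ‖(2 * Complex.I)⁻¹ • (T - adjoint T)‖ := by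
  simp only [← star_eq_adjoint, ← realPart_apply_coe_eq_inv_two_smul,
    ← imaginaryPart_apply_coe_eq_inv_two_I_smul] at h ⊢
  have hmax_le : max ‖(ℜ T : H →L[ℂ] H)‖ ‖(ℑ T : H →L[ℂ] H)‖ ≤ nr T :=
    max_le (norm_realPart_le_nr T) (norm_imaginaryPart_le_nr T)
  have hmax := sup_eq_half_smul_add_add_abs_sub' ℝ ‖(ℜ T : H →L[ℂ] H)‖ ‖(ℑ T : H →L[ℂ] H)‖
  rw [abs_sub_comm, smul_eq_mul] at hmax
  have htriangle := norm_le_norm_realPart_add_norm_imaginaryPart T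
  constructor <;> linarith
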